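/- arXiv:1501.05718 — 3 statements merged into one kernel-verified Lean document; each statement's English description precedes it below -/
import Mathlib

section
/- (Monotone convergence for continuous gauge norms) If α is a continuous ‖·‖₁-dominating normalized gauge norm on L^∞(𝕋) and 0 ≤ f₁ ≤ f₂ ≤ ⋯ are measurable functions with fₙ → f a.e. (m), then α(fₙ) → α(f). -/
open MeasureTheory Complex Filter Topology Set ENNReal NNReal

noncomputable section

instance : Fact ((0:ℝ) < 1) := ⟨one_pos⟩

/-- The unit circle, modelled as `ℝ/ℤ`, with normalized Haar (arc-length) measure. -/
abbrev T1 : Type := AddCircle (1 : ℝ)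

/-- Normalized Haar measure on the circle. -/
abbrev hm : Measure T1 := volume

/-- The identity function `z` on the circle, as a complex-valued function. -/
def ztor : T1 → ℂ := fun t => fourier 1 t

/-- A `‖·‖₁`-dominating normalized gauge norm: a norm on `L^∞(𝕋)` with `α(1)=1`,
`α(|f|)=α(f)`, `α(f) ≥ ‖f‖₁`, extended to all measurable functions by
`α(f) = sup{α(s) : s simple, 0 ≤ s ≤ |f|}`.  Values are in `ℝ≥0∞`. -/
structure GaugeNorm where
  toFun : (T1 → ℂ) → ℝ≥0∞
  ae_congr' : ∀ f g : T1 → ℂ, f =ᵐ[hm] g → toFun f = toFun g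
  add_le' : ∀ f g : T1 → ℂ, toFun (f + g) ≤ toFun f + toFun g
  smul' : ∀ (c : ℂ) (f : T1 → ℂ), toFun (c • f) = ‖c‖₊ * toFun f
  norm_one' : toFun 1 = 1
  abs' : ∀ f : T1 → ℂ, toFun (fun x => ((‖f x‖ : ℝ) : ℂ)) = toFun f
  dominating' : ∀ f : T1 → ℂ, MemLp f ⊤ hm → eLpNorm f 1 hm ≤ toFun f
  ext_simple' : ∀ f : T1 → ℂ, AEMeasurable f hm →
    toFun f = ⨆ (s : MeasureTheory.SimpleFunc T1 ℝ)
        (_ : ∀ x, 0 ≤ s x ∧ s x ≤ ‖f x‖),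
      toFun (fun x => (s x : ℂ))

/-- Continuity of a gauge norm: `α(χ_E) → 0` as `m(E) → 0⁺`. -/
def GaugeNorm.IsCont (α : GaugeNorm) : Prop :=
  ∀ ε : ℝ≥0∞, 0 < ε → ∃ δ : ℝ≥0∞, 0 < δ ∧ ∀ E : Set T1, MeasurableSet E →
    hm E < δ → α.toFun (E.indicator 1) < ε

/-- Membership in `L^∞(𝕋)`. -/
def MemLinf (f : T1 → ℂ) : Prop := MemLp f ⊤ hm

/-- Membership in `H^∞`: bounded with vanishing negative Fourier coefficients. -/
def MemHinf (f : T1 → ℂ) : Prop :=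
  MemLp f ⊤ hm ∧ ∀ n : ℤ, n < 0 → fourierCoeff f n = 0

/-- Membership in the Hardy space `H¹`. -/
def MemH1 (f : T1 → ℂ) : Prop :=
  MemLp f 1 hm ∧ ∀ n : ℤ, n < 0 → fourierCoeff f n = 0

/-- Membership in `𝓛^α = {f : α(f) < ∞}`. -/
def GaugeNorm.MemLBig (α : GaugeNorm) (f : T1 → ℂ) : Prop :=
  AEMeasurable f hm ∧ α.toFun f < ⊤

/-- Membership in `L^α`, the `α`-closure of `L^∞` in `𝓛^α`. -/
def GaugeNorm.MemL (α : GaugeNorm) (f : T1 → ℂ) : Prop :=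
  α.MemLBig f ∧ ∀ ε : ℝ≥0∞, 0 < ε → ∃ g, MemLinf g ∧ α.toFun (f - g) < ε

/-- Membership in `H^α`, the `α`-closure of `H^∞`. -/
def GaugeNorm.MemH (α : GaugeNorm) (f : T1 → ℂ) : Prop :=
  α.MemLBig f ∧ ∀ ε : ℝ≥0∞, 0 < ε → ∃ g, MemHinf g ∧ α.toFun (f - g) < ε

/-- `W` is a linear subspace (of functions). -/
def IsSubspace (W : Set (T1 → ℂ)) : Prop :=
  0 ∈ W ∧ (∀ f g, f ∈ W → g ∈ W → f + g ∈ W) ∧ ∀ (c : ℂ) f, f ∈ W → c • f ∈ W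

/-- `zW ⊆ W` (up to a.e. equality). -/
def ZInvariant (W : Set (T1 → ℂ)) : Prop :=
  ∀ f ∈ W, ∃ g ∈ W, g =ᵐ[hm] fun x => ztor x * f x

/-- `W` is `α`-closed (in `L^α`). -/
def GaugeNorm.ClosedSet (α : GaugeNorm) (W : Set (T1 → ℂ)) : Prop :=
  ∀ f, α.MemL f → (∀ ε : ℝ≥0∞, 0 < ε → ∃ g ∈ W, α.toFun (f - g) < ε) →
    ∃ g ∈ W, f =ᵐ[hm] g

/-- `M` is weak*-closed in `L^∞ = (L¹)^*`: every `f ∈ L^∞` all of whose basic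
weak* neighborhoods meet `M` is (a.e. equal to an element) in `M`. -/
def IsWeakStarClosed (M : Set (T1 → ℂ)) : Prop :=
  ∀ f, MemLinf f →
    (∀ ε : ℝ, 0 < ε → ∀ S : Finset (T1 → ℂ), (∀ h ∈ S, Integrable h hm) →
      ∃ g ∈ M, ∀ h ∈ S, ‖∫ x, (g x - f x) * h x ∂hm‖ < ε) →
    ∃ g ∈ M, f =ᵐ[hm] g

/-- The dual norm `α′(f) = sup{∫|fh|dm : h ∈ L^∞, α(h) ≤ 1}`. -/
def GaugeNorm.dual (α : GaugeNorm) (f : T1 → ℂ) : ℝ≥0∞ :=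
  ⨆ (h : T1 → ℂ) (_ : MemLinf h ∧ α.toFun h ≤ 1),
    ∫⁻ x, (‖f x * h x‖₊ : ℝ≥0∞) ∂hm

/-- `W` is saturated under a.e. equality (within `L^α`). -/
def GaugeNorm.AESaturated (α : GaugeNorm) (W : Set (T1 → ℂ)) : Prop :=
  ∀ f g, f ∈ W → g =ᵐ[hm] f → α.MemL g → g ∈ W

/-! Since `α(F n)` increases and is bounded by `α(f)`, only `α(f) ≤ sup α(F n)` needs proof, and by
the definition of `α` on measurable functions it suffices to bound `α(s)` for simple `0 ≤ s ≤ |f|`,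
say `s ≤ C`. On a finite measure space a.e. convergence implies convergence in measure, so the set
`A n` where `|F n - f| ≥ ε` has measure tending to `0`, and `s ≤ |F n| + ε + C·χ_{A n}`. Hence
`α(s) ≤ α(F n) + ε + C·α(χ_{A n})`, and continuity of `α` makes the last term vanish. -/

theorem ae_le_of_ae_monotone_of_ae_tendsto {X β : Type*} [MeasurableSpace X] {μ : Measure X}
    [TopologicalSpace β] [Preorder β] [OrderClosedTopology β] {F : ℕ → X → β} {f : X → β}
    (hmono : ∀ n, ∀ᵐ x ∂μ, F n x ≤ F (n + 1) x)
    (hlim : ∀ᵐ x ∂μ, Tendsto (fun n => F n x) atTop (𝓝 (f x))) (n : ℕ) :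
    ∀ᵐ x ∂μ, F n x ≤ f x :=
  ((ae_all_iff.2 hmono).and hlim).mono fun _ hx =>
    (monotone_nat_of_le_succ hx.1).ge_of_tendsto hx.2 n

namespace GaugeNorm

variable (α : GaugeNorm)

theorem toFun_le_of_forall_norm_le {f g : T1 → ℂ} (hf : AEMeasurable f hm)
    (hg : AEMeasurable g hm) (h : ∀ x, ‖f x‖ ≤ ‖g x‖) : α.toFun f ≤ α.toFun g := by
  rw [α.ext_simple' f hf, α.ext_simple' g hg]
  exact iSup₂_le fun s hs => le_iSup₂_of_le s (fun x => ⟨(hs x).1, (hs x).2.trans (h x)⟩) le_rfl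

theorem toFun_le_of_ae_norm_le {f g : T1 → ℂ} (hf : AEMeasurable f hm)
    (hg : AEMeasurable g hm) (h : ∀ᵐ x ∂hm, ‖f x‖ ≤ ‖g x‖) : α.toFun f ≤ α.toFun g := by
  have hmin : AEMeasurable (fun x => ((min ‖f x‖ ‖g x‖ : ℝ) : ℂ)) hm := by fun_prop
  calc α.toFun f = α.toFun (fun x => ((‖f x‖ : ℝ) : ℂ)) := (α.abs' f).symm
    _ = α.toFun (fun x => ((min ‖f x‖ ‖g x‖ : ℝ) : ℂ)) :=
        α.ae_congr' _ _ (h.mono fun x hx => by simp only [min_eq_left hx])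
    _ ≤ α.toFun g := α.toFun_le_of_forall_norm_le hmin hg fun x => by
        simp [abs_of_nonneg (le_min (norm_nonneg (f x)) (norm_nonneg (g x)))]

theorem toFun_const (c : ℂ) : α.toFun (fun _ => c) = ‖c‖₊ := by
  have h : (fun _ : T1 => c) = c • (1 : T1 → ℂ) := by
    funext; simp
  rw [h, α.smul', α.norm_one', mul_one]

theorem toFun_indicator_const (c : ℂ) (A : Set T1) :
    α.toFun (A.indicator fun _ => c) = ‖c‖₊ * α.toFun (A.indicator 1) := by
  have h : (A.indicator fun _ => c) = c • A.indicator (1 : T1 → ℂ) := by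
    funext x
    by_cases hx : x ∈ A <;> simp [hx]
  rw [h, α.smul']

variable {α}

theorem IsCont.tendsto_toFun_indicator (hc : α.IsCont) {ι : Type*} {l : Filter ι}
    {A : ι → Set T1} (hA : ∀ i, MeasurableSet (A i))
    (h : Tendsto (fun i => hm (A i)) l (𝓝 0)) :
    Tendsto (fun i => α.toFun ((A i).indicator 1)) l (𝓝 0) := by
  refine ENNReal.tendsto_nhds_zero.2 fun ε hε => ?_
  obtain ⟨δ, hδ, hsmall⟩ := hc ε hε
  exact (h.eventually_lt_const hδ).mono fun i hi => (hsmall _ (hA i) hi).le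

theorem IsCont.toFun_le_iSup_of_tendstoInMeasure_of_norm_le (hc : α.IsCont)
    {F : ℕ → T1 → ℂ} {f u : T1 → ℂ} {C : ℝ} (hF : ∀ n, AEMeasurable (F n) hm)
    (hFf : TendstoInMeasure hm F atTop f) (hu : AEMeasurable u hm)
    (hu_bdd : ∀ x, ‖u x‖ ≤ C) (hu_le : ∀ x, ‖u x‖ ≤ ‖f x‖) :
    α.toFun u ≤ ⨆ n, α.toFun (F n) := by
  refine ENNReal.le_of_forall_pos_le_add fun ε hε _ => ?_
  set A : ℕ → Set T1 := fun n => toMeasurable hm {x | (ε : ℝ) ≤ dist (F n x) (f x)}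
  have hA : Tendsto (fun n => α.toFun ((A n).indicator 1)) atTop (𝓝 0) :=
    hc.tendsto_toFun_indicator (fun n => measurableSet_toMeasurable _ _) (by
      simpa only [A, measure_toMeasurable] using tendstoInMeasure_iff_dist.1 hFf ε hε)
  have hbound : ∀ n, α.toFun u ≤
      (⨆ n, α.toFun (F n)) + ε + ‖(C : ℂ)‖₊ * α.toFun ((A n).indicator 1) := by
    intro n
    -- `|u| ≤ |f| ≤ |F n| + ε` off the small set `A n`, and `|u| ≤ C` on it.
    set G : T1 → ℂ :=
      (fun x => ((‖F n x‖ : ℝ) : ℂ)) + (fun _ => ((ε : ℝ) : ℂ)) + (A n).indicator fun _ => (C : ℂ)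
    have hG : AEMeasurable G hm :=
      (by fun_prop : AEMeasurable (fun x => ((‖F n x‖ : ℝ) : ℂ)) hm).add aemeasurable_const
        |>.add (aemeasurable_const.indicator (measurableSet_toMeasurable _ _))
    have hpt : ∀ x, ‖u x‖ ≤ ‖G x‖ := by
      intro x
      have hGx : G x = ((‖F n x‖ + ε + (A n).indicator (fun _ => C) x : ℝ) : ℂ) := by
        by_cases hx : x ∈ A n <;> simp [G, hx]
      rw [hGx, Complex.norm_real, Real.norm_eq_abs]
      refine le_trans ?_ (le_abs_self _)
      by_cases hx : x ∈ A n
      · simp only [Set.indicator_of_mem hx]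
        linarith [hu_bdd x, norm_nonneg (F n x), ε.2]
      · have hclose : dist (F n x) (f x) < ε := not_le.1 fun h => hx (subset_toMeasurable _ _ h)
        simp only [Set.indicator_of_notMem hx, add_zero]
        linarith [hu_le x, norm_le_norm_add_norm_sub (F n x) (f x), dist_eq_norm (F n x) (f x)]
    calc α.toFun u ≤ α.toFun G := α.toFun_le_of_forall_norm_le hu hG hpt
      _ ≤ α.toFun (fun x => ((‖F n x‖ : ℝ) : ℂ)) + α.toFun (fun _ => ((ε : ℝ) : ℂ))
          + α.toFun ((A n).indicator fun _ => (C : ℂ)) :=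
        (α.add_le' _ _).trans (add_le_add_left (α.add_le' _ _) _)
      _ ≤ (⨆ n, α.toFun (F n)) + ε + ‖(C : ℂ)‖₊ * α.toFun ((A n).indicator 1) := by
        rw [α.abs', α.toFun_const, α.toFun_indicator_const]
        gcongr
        · exact le_iSup (fun n => α.toFun (F n)) n
        · simp
  have hbound_lim :=
    (ENNReal.Tendsto.const_mul (a := ‖(C : ℂ)‖₊) hA (Or.inr ENNReal.coe_ne_top)).const_add
      ((⨆ n, α.toFun (F n)) + ε)
  rw [mul_zero, add_zero] at hbound_lim
  exact ge_of_tendsto' hbound_lim hbound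

theorem IsCont.toFun_le_iSup_of_tendstoInMeasure (hc : α.IsCont) {F : ℕ → T1 → ℂ}
    {f : T1 → ℂ} (hF : ∀ n, AEMeasurable (F n) hm) (hFf : TendstoInMeasure hm F atTop f)
    (hf : AEMeasurable f hm) : α.toFun f ≤ ⨆ n, α.toFun (F n) := by
  rw [α.ext_simple' f hf]
  refine iSup₂_le fun s hs => ?_
  obtain ⟨C, hC⟩ := s.exists_forall_le
  have hnorm : ∀ x, ‖(s x : ℂ)‖ = s x := fun x => by
    rw [Complex.norm_real, Real.norm_of_nonneg (hs x).1]
  exact hc.toFun_le_iSup_of_tendstoInMeasure_of_norm_le hF hFf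
    (Complex.measurable_ofReal.comp s.measurable).aemeasurable
    (fun x => (hnorm x).trans_le (hC x)) fun x => (hnorm x).trans_le (hs x).2

end GaugeNorm

/-- monotone convergence for continuous gauge norms. -/
theorem stmt3 (α : GaugeNorm) (hc : α.IsCont) (f : T1 → ℝ) (F : ℕ → T1 → ℝ)
    (hmeas : ∀ n, AEMeasurable (F n) hm)
    (hpos : ∀ n, ∀ᵐ x ∂hm, 0 ≤ F n x)
    (hmono : ∀ n, ∀ᵐ x ∂hm, F n x ≤ F (n + 1) x)
    (hlim : ∀ᵐ x ∂hm, Tendsto (fun n => F n x) atTop (𝓝 (f x))) :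
    Tendsto (fun n => α.toFun (fun x => (F n x : ℂ))) atTop
      (𝓝 (α.toFun (fun x => (f x : ℂ)))) := by
  have hf : AEMeasurable (fun x => (f x : ℂ)) hm :=
    Complex.measurable_ofReal.comp_aemeasurable
      (aemeasurable_of_tendsto_metrizable_ae _ hmeas hlim)
  have hF : ∀ n, AEMeasurable (fun x => (F n x : ℂ)) hm := fun n =>
    Complex.measurable_ofReal.comp_aemeasurable (hmeas n)
  have hnorm_le {a b : ℝ} (ha : 0 ≤ a) (hab : a ≤ b) : ‖(a : ℂ)‖ ≤ ‖(b : ℂ)‖ := by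
    simpa only [Complex.norm_real, Real.norm_eq_abs] using abs_le_abs_of_nonneg ha hab
  have hmonoα : Monotone fun n => α.toFun (fun x => (F n x : ℂ)) :=
    monotone_nat_of_le_succ fun n => α.toFun_le_of_ae_norm_le (hF n) (hF (n + 1)) <|
      ((hpos n).and (hmono n)).mono fun _ hx => hnorm_le hx.1 hx.2
  have hle : ∀ n, α.toFun (fun x => (F n x : ℂ)) ≤ α.toFun (fun x => (f x : ℂ)) := fun n =>
    α.toFun_le_of_ae_norm_le (hF n) hf <|
      ((hpos n).and (ae_le_of_ae_monotone_of_ae_tendsto hmono hlim n)).mono fun _ hx =>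
        hnorm_le hx.1 hx.2
  have hge : α.toFun (fun x => (f x : ℂ)) ≤ ⨆ n, α.toFun (fun x => (F n x : ℂ)) :=
    hc.toFun_le_iSup_of_tendstoInMeasure hF (tendstoInMeasure_of_tendsto_ae
      (fun n => (hF n).aestronglyMeasurable)
      (hlim.mono fun x hx => (Complex.continuous_ofReal.tendsto _).comp hx)) hf
  rw [le_antisymm hge (iSup_le hle)]
  exact tendsto_atTop_iSup hmonoα
end
end

section
/- If α is a continuous ‖·‖₁-dominating normalized gauge norm on L^∞(𝕋), then 𝓛^α = {f measurable : α(f) < ∞} is a Banach space under the norm α (every absolutely convergent series in 𝓛^α converges in 𝓛^α). -/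
open MeasureTheory Complex Filter Topology Set ENNReal NNReal

noncomputable section

/-!
The limit is the pointwise sum `f = ∑ Fₙ`, and the theorem reduces to the Fatou-type estimate
`α(g) ≤ 2 ∑ α(Gₙ)` whenever `|g| ≤ ∑ |Gₙ|`, applied to the tails of the series. For a simple
`0 ≤ φ ≤ |g|`, the sets `{φ ≤ 2 ∑_{n<M} |Gₙ|}` increase to almost all of `𝕋`; by continuity of `α`
the part of `φ` outside them has small norm, and the part inside is dominated by
`2 ∑_{n<M} |Gₙ|`, whose norm is at most `2 ∑ α(Gₙ)`.
-/

namespace GaugeNorm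

variable (α : GaugeNorm)

theorem toFun_zero : α.toFun 0 = 0 := by
  simpa using α.smul' 0 1

theorem toFun_mono {f g : T1 → ℂ} (hf : AEMeasurable f hm) (hg : AEMeasurable g hm)
    (hfg : ∀ᵐ x ∂hm, ‖f x‖ ≤ ‖g x‖) : α.toFun f ≤ α.toFun g := by
  rw [α.ext_simple' f hf, α.ext_simple' g hg]
  refine iSup₂_le fun φ hφ => ?_
  -- `φ` fits under `‖g‖` only a.e.; set it to `0` on a measurable null set `N` to fix this.
  obtain ⟨N, hN, hNm, hN0⟩ := exists_measurable_superset_of_null (ae_iff.mp hfg)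
  refine le_iSup₂_of_le (SimpleFunc.piecewise N hNm 0 φ) (fun x => ?_) (α.ae_congr' _ _ ?_).le
  · by_cases hx : x ∈ N
    · simp [hx]
    · simp only [SimpleFunc.piecewise_apply, if_neg hx]
      exact ⟨(hφ x).1, (hφ x).2.trans (not_not.mp fun h => hx (hN h))⟩
  · filter_upwards [measure_eq_zero_iff_ae_notMem.mp hN0] with x hx
    simp [hx]

theorem toFun_indicator_le {φ : T1 → ℂ} (hφ : AEMeasurable φ hm) {C : ℝ≥0}
    (hC : ∀ x, ‖φ x‖ ≤ C) {E : Set T1} (hE : MeasurableSet E) :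
    α.toFun (E.indicator φ) ≤ C * α.toFun (E.indicator 1) :=
  calc α.toFun (E.indicator φ) ≤ α.toFun (((C : ℝ) : ℂ) • E.indicator 1) := by
        refine α.toFun_mono (hφ.indicator hE) ((aemeasurable_const.indicator hE).const_smul _)
          (.of_forall fun x => ?_)
        by_cases hx : x ∈ E <;> simp [hx, hC x]
    _ = C * α.toFun (E.indicator 1) := by
        rw [α.smul']
        simp

variable {α}

theorem IsCont.toFun_le_iSup_indicator (hc : α.IsCont) {φ : T1 → ℂ} (hφ : AEMeasurable φ hm)
    {C : ℝ≥0} (hC : ∀ x, ‖φ x‖ ≤ C) {E : ℕ → Set T1} (hE : ∀ M, MeasurableSet (E M))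
    (hEmono : Monotone E) (hEcover : ∀ᵐ x ∂hm, ∃ M, x ∈ E M) :
    α.toFun φ ≤ ⨆ M, α.toFun ((E M).indicator φ) := by
  have hμ : Tendsto (fun M => hm (E M)ᶜ) atTop (𝓝 0) := by
    have hnull : hm (⋂ M, (E M)ᶜ) = 0 := by
      rw [← compl_iUnion]
      exact ae_iff.mp (by simpa only [← mem_iUnion] using hEcover)
    simpa [hnull, Function.comp_def] using
      tendsto_measure_iInter_atTop (fun M => (hE M).compl.nullMeasurableSet)
        (fun M M' h => compl_subset_compl.mpr (hEmono h)) ⟨0, measure_ne_top hm _⟩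
  refine ENNReal.le_of_forall_pos_le_add fun ε hε _ => ?_
  obtain ⟨δ, hδ, hδE⟩ := hc (ε / (C + 1)) (ENNReal.div_pos (by simpa using hε.ne') (by simp))
  obtain ⟨M, hM⟩ := (hμ.eventually_lt_const hδ).exists
  calc α.toFun φ ≤ α.toFun ((E M).indicator φ) + α.toFun ((E M)ᶜ.indicator φ) := by
        simpa only [indicator_self_add_compl] using
          α.add_le' ((E M).indicator φ) ((E M)ᶜ.indicator φ)
    _ ≤ (⨆ M, α.toFun ((E M).indicator φ)) + (C + 1) * (ε / (C + 1)) := by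
        gcongr
        · exact le_iSup (fun M => α.toFun ((E M).indicator φ)) M
        · calc α.toFun ((E M)ᶜ.indicator φ) ≤ C * α.toFun ((E M)ᶜ.indicator 1) :=
                α.toFun_indicator_le hφ hC (hE M).compl
            _ ≤ (C + 1) * (ε / (C + 1)) := by
                gcongr
                · exact le_self_add
                · exact (hδE _ (hE M).compl hM).le
    _ ≤ (⨆ M, α.toFun ((E M).indicator φ)) + ε := by
        gcongr
        exact ENNReal.mul_div_le

theorem IsCont.toFun_le_two_mul_iSup (hc : α.IsCont) {g : T1 → ℂ} (hg : AEMeasurable g hm)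
    {H : ℕ → T1 → ℝ} (hHm : ∀ M, Measurable (H M)) (hH0 : ∀ M x, 0 ≤ H M x)
    (hHmono : Monotone H) (hgH : ∀ᵐ x ∂hm, ‖g x‖ₑ ≤ ⨆ M, ENNReal.ofReal (H M x)) :
    α.toFun g ≤ 2 * ⨆ M, α.toFun (fun x => (H M x : ℂ)) := by
  rw [α.ext_simple' g hg]
  refine iSup₂_le fun φ hφ => ?_
  obtain ⟨C, hC⟩ := φ.exists_forall_norm_le
  -- The factor `2` makes the sets `{φ ≤ 2 H_M}` exhaust `{φ > 0}` even where `φ = sup_M H_M`.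
  set E : ℕ → Set T1 := fun M => {x | φ x ≤ 2 * H M x}
  have hEm : ∀ M, MeasurableSet (E M) := fun M =>
    measurableSet_le φ.measurable ((hHm M).const_mul 2)
  have hcover : ∀ᵐ x ∂hm, ∃ M, x ∈ E M := by
    filter_upwards [hgH] with x hx
    rcases (hφ x).1.eq_or_lt with h0 | hpos
    · exact ⟨0, by simp [E, ← h0, hH0]⟩
    have : ENNReal.ofReal (φ x / 2) < ⨆ M, ENNReal.ofReal (H M x) :=
      calc ENNReal.ofReal (φ x / 2) < ENNReal.ofReal (φ x) :=
            (ENNReal.ofReal_lt_ofReal_iff hpos).mpr (by linarith)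
        _ ≤ ‖g x‖ₑ := by
            rw [← ofReal_norm]
            exact ENNReal.ofReal_le_ofReal (hφ x).2
        _ ≤ _ := hx
    obtain ⟨M, hM⟩ := lt_iSup_iff.mp this
    have := (ENNReal.ofReal_lt_ofReal_iff_of_nonneg (by linarith)).mp hM
    exact ⟨M, show φ x ≤ 2 * H M x by linarith⟩
  have hφm : AEMeasurable (fun x => (φ x : ℂ)) hm :=
    (Complex.measurable_ofReal.comp φ.measurable).aemeasurable
  calc α.toFun (fun x => (φ x : ℂ)) ≤ ⨆ M, α.toFun ((E M).indicator fun x => (φ x : ℂ)) :=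
        hc.toFun_le_iSup_indicator hφm (C := C.toNNReal)
          (fun x => by simpa using (hC x).trans (Real.le_coe_toNNReal C))
          hEm (fun M M' h x (hx : φ x ≤ 2 * H M x) => show φ x ≤ 2 * H M' x by
            linarith [hHmono h x]) hcover
    _ ≤ ⨆ M, α.toFun ((2 : ℂ) • fun x => (H M x : ℂ)) := by
        refine iSup_mono fun M => α.toFun_mono (hφm.indicator (hEm M))
          ((Complex.measurable_ofReal.comp (hHm M)).aemeasurable.const_smul _)
          (.of_forall fun x => ?_)
        by_cases hx : x ∈ E M
        · have hφH : φ x ≤ 2 * H M x := hx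
          simpa [indicator_of_mem hx, abs_of_nonneg (hφ x).1, abs_of_nonneg (hH0 M x)] using hφH
        · simp [hx]
    _ = 2 * ⨆ M, α.toFun (fun x => (H M x : ℂ)) := by
        simp [α.smul', ENNReal.mul_iSup]

theorem IsCont.toFun_le_two_mul_tsum (hc : α.IsCont) {g : T1 → ℂ} (hg : AEMeasurable g hm)
    {G : ℕ → T1 → ℂ} (hG : ∀ n, AEMeasurable (G n) hm)
    (hgG : ∀ᵐ x ∂hm, ‖g x‖ₑ ≤ ∑' n, ‖G n x‖ₑ) : α.toFun g ≤ 2 * ∑' n, α.toFun (G n) := by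
  set G' := fun n => (hG n).mk (G n)
  have hGG' : ∀ᵐ x ∂hm, ∀ n, G n x = G' n x := ae_all_iff.mpr fun n => (hG n).ae_eq_mk
  set H : ℕ → T1 → ℝ := fun M x => ∑ n ∈ Finset.range M, ‖G' n x‖
  have hH : ∀ x, ⨆ M, ENNReal.ofReal (H M x) = ∑' n, ‖G' n x‖ₑ := fun x => by
    simp only [H, ENNReal.tsum_eq_iSup_nat, ← ofReal_norm,
      ENNReal.ofReal_sum_of_nonneg fun n _ => norm_nonneg (G' n x)]
  have hαH : ∀ M, α.toFun (fun x => (H M x : ℂ)) ≤ ∑' n, α.toFun (G n) := fun M =>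
    calc α.toFun (fun x => (H M x : ℂ))
        = α.toFun (∑ n ∈ Finset.range M, fun x => (‖G' n x‖ : ℂ)) := by
          congr 1
          ext x
          simp [H]
      _ ≤ ∑ n ∈ Finset.range M, α.toFun (fun x => (‖G' n x‖ : ℂ)) :=
          Finset.le_sum_of_subadditive α.toFun α.toFun_zero.le α.add_le' _ _
      _ = ∑ n ∈ Finset.range M, α.toFun (G n) := by
          simp only [α.abs', G', α.ae_congr' _ _ (hG _).ae_eq_mk.symm]
      _ ≤ ∑' n, α.toFun (G n) := ENNReal.sum_le_tsum _
  calc α.toFun g ≤ 2 * ⨆ M, α.toFun (fun x => (H M x : ℂ)) := by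
        refine hc.toFun_le_two_mul_iSup hg
          (fun M => Finset.measurable_sum _ fun n _ => (hG n).measurable_mk.norm)
          (fun M x => Finset.sum_nonneg fun n _ => norm_nonneg _)
          (fun M M' h x => Finset.sum_le_sum_of_subset_of_nonneg (Finset.range_mono h)
            fun n _ _ => norm_nonneg _) ?_
        filter_upwards [hgG, hGG'] with x hx hx'
        simpa [hH, hx'] using hx
    _ ≤ 2 * ∑' n, α.toFun (G n) := by
        gcongr
        exact iSup_le hαH

end GaugeNorm

theorem enorm_tsum_sub_sum_range_le {E : Type*} [NormedAddCommGroup E] [CompleteSpace E]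
    (a : ℕ → E) (N : ℕ) : ‖∑' n, a n - ∑ n ∈ Finset.range N, a n‖ₑ ≤ ∑' k, ‖a (k + N)‖ₑ := by
  by_cases h : ∑' k, ‖a (k + N)‖ₑ = ∞
  · simp [h]
  have ha : Summable a :=
    (_root_.summable_nat_add_iff N).mp (tsum_enorm_ne_top_iff_summable_norm.mp h).of_norm
  rw [← ha.sum_add_tsum_nat_add N, add_sub_cancel_left]
  exact enorm_tsum_le_tsum_enorm

/-- for continuous `α`, `𝓛^α` is complete: every absolutely
convergent series in `𝓛^α` converges in `𝓛^α`. -/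
theorem stmt4 (α : GaugeNorm) (hc : α.IsCont) (F : ℕ → T1 → ℂ)
    (hF : ∀ n, α.MemLBig (F n))
    (habs : (∑' n, α.toFun (F n)) < ⊤) :
    ∃ f : T1 → ℂ, α.MemLBig f ∧
      Tendsto (fun N => α.toFun (f - fun x => ∑ n ∈ Finset.range N, F n x))
        atTop (𝓝 0) := by
  have hFm : ∀ n, AEMeasurable (F n) hm := fun n => (hF n).1
  set f : T1 → ℂ := fun x => ∑' n, F n x
  have hfm : AEMeasurable f hm := AEMeasurable.tsum hFm
  have htail : ∀ N, α.toFun (f - fun x => ∑ n ∈ Finset.range N, F n x)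
      ≤ 2 * ∑' k, α.toFun (F (k + N)) := fun N =>
    hc.toFun_le_two_mul_tsum (hfm.sub (Finset.aemeasurable_fun_sum _ fun n _ => hFm n))
      (fun k => hFm (k + N)) (.of_forall fun x => enorm_tsum_sub_sum_range_le (F · x) N)
  refine ⟨f, ⟨hfm, ?_⟩, ?_⟩
  · calc α.toFun f ≤ 2 * ∑' n, α.toFun (F n) :=
          hc.toFun_le_two_mul_tsum hfm hFm (.of_forall fun x => enorm_tsum_le_tsum_enorm)
      _ < ⊤ := ENNReal.mul_lt_top (by norm_num) habs
  · have h2t := ENNReal.Tendsto.const_mul (a := 2) (ENNReal.tendsto_sum_nat_add _ habs.ne)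
      (Or.inr ofNat_ne_top)
    rw [mul_zero] at h2t
    exact tendsto_of_tendsto_of_tendsto_of_le_of_le tendsto_const_nhds h2t (fun _ => zero_le)
      htail
end
end

section
/- Let α be a continuous ‖·‖₁-dominating normalized gauge norm on L^∞(𝕋). Then the closed unit ball 𝔹 = {f ∈ L^∞ : ‖f‖_∞ ≤ 1} is closed in L^α with respect to the norm α. -/
open MeasureTheory Complex Filter Topology Set ENNReal NNReal

noncomputable section

/-!
Because `α` dominates the `L¹` norm on simple functions, and `α(h)` is the supremum of `α(s)` over
simple `0 ≤ s ≤ |h|`, it obeys Markov's inequality `δ · m{|h| ≥ δ} ≤ α(h)`. If `‖g‖_∞ ≤ 1`, then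
almost everywhere `{|f| ≥ 1 + δ} ⊆ {|f - g| ≥ δ}`, so `δ · m{|f| ≥ 1 + δ} ≤ α(f - g)`, which the
approximating `g` make arbitrarily small. Hence `|f| < 1 + δ` a.e. for every `δ > 0`.
-/

namespace GaugeNorm

variable (α : GaugeNorm)

lemma toFun_simpleFunc_le {h : T1 → ℂ} (hh : AEMeasurable h hm) (s : SimpleFunc T1 ℝ)
    (hs : ∀ x, 0 ≤ s x ∧ s x ≤ ‖h x‖) : α.toFun (fun x => (s x : ℂ)) ≤ α.toFun h := by
  rw [α.ext_simple' h hh]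
  exact le_iSup₂ (f := fun (t : SimpleFunc T1 ℝ) (_ : ∀ x, 0 ≤ t x ∧ t x ≤ ‖h x‖) =>
    α.toFun (fun x => (t x : ℂ))) s hs

lemma mul_meas_ge_le_toFun_of_measurable {h : T1 → ℂ} (hh : Measurable h) {c : ℝ}
    (hc : 0 ≤ c) : ENNReal.ofReal c * hm {x | c ≤ ‖h x‖} ≤ α.toFun h := by
  set E := {x | c ≤ ‖h x‖}
  have hE : MeasurableSet E := measurableSet_le measurable_const hh.norm
  set s : SimpleFunc T1 ℝ := .piecewise E hE (.const T1 c) (.const T1 0)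
  have hs : (fun x => (s x : ℂ)) = E.indicator fun _ => (c : ℂ) := by
    ext x
    by_cases hx : x ∈ E <;> simp [s, hx]
  calc ENNReal.ofReal c * hm E
      = eLpNorm (fun x => (s x : ℂ)) 1 hm := by
        rw [hs, eLpNorm_indicator_const hE one_ne_zero ENNReal.one_ne_top]
        simp only [← ofReal_norm, Complex.norm_real, Real.norm_of_nonneg hc, ENNReal.toReal_one,
          div_one, ENNReal.rpow_one]
    _ ≤ α.toFun (fun x => (s x : ℂ)) :=
        α.dominating' _ (hs ▸ (memLp_top_const _).indicator hE)
    _ ≤ α.toFun h := α.toFun_simpleFunc_le hh.aemeasurable s fun x => by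
        by_cases hx : x ∈ E <;> simp_all [s, E]

lemma mul_meas_ge_le_toFun {h : T1 → ℂ} (hh : AEMeasurable h hm) {c : ℝ} (hc : 0 ≤ c) :
    ENNReal.ofReal c * hm {x | c ≤ ‖h x‖} ≤ α.toFun h := by
  have hset : {x | c ≤ ‖h x‖} =ᵐ[hm] {x | c ≤ ‖hh.mk h x‖} := by
    filter_upwards [hh.ae_eq_mk] with x hx
    show (c ≤ ‖h x‖) = (c ≤ ‖hh.mk h x‖)
    rw [hx]
  rw [measure_congr hset, α.ae_congr' _ _ hh.ae_eq_mk]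
  exact α.mul_meas_ge_le_toFun_of_measurable hh.measurable_mk hc

end GaugeNorm

section EssSup

variable {X E : Type*} [MeasurableSpace X] {μ : Measure X} [NormedAddCommGroup E] {f : X → E}

lemma ae_norm_le_of_eLpNorm_top_le {C : ℝ≥0} (h : eLpNorm f ⊤ μ ≤ C) :
    ∀ᵐ x ∂μ, ‖f x‖ ≤ C := by
  rw [eLpNorm_exponent_top] at h
  filter_upwards [ae_le_eLpNormEssSup (f := f) (μ := μ)] with x hx
  have := hx.trans h
  rw [enorm_eq_nnnorm, ENNReal.coe_le_coe] at this
  exact_mod_cast this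

lemma eLpNorm_top_le_of_measure_norm_ge_eq_zero {C : ℝ} (hC : 0 ≤ C)
    (h : ∀ δ : ℝ, 0 < δ → μ {x | C + δ ≤ ‖f x‖} = 0) :
    eLpNorm f ⊤ μ ≤ ENNReal.ofReal C := by
  rw [eLpNorm_exponent_top]
  refine ENNReal.le_of_forall_pos_le_add fun δ hδ _ => ?_
  have hbound : ∀ᵐ x ∂μ, ‖f x‖ ≤ C + δ := by
    filter_upwards [measure_eq_zero_iff_ae_notMem.mp (h δ hδ)] with x hx
    simpa using (not_le.mp hx).le
  calc eLpNormEssSup f μ ≤ ENNReal.ofReal (C + δ) := eLpNormEssSup_le_of_ae_bound hbound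
    _ = ENNReal.ofReal C + δ := by rw [ENNReal.ofReal_add hC δ.coe_nonneg, ofReal_coe_nnreal]

end EssSup

theorem stmt10_general (α : GaugeNorm) (f : T1 → ℂ) (hf : α.MemL f)
    (happrox : ∀ ε : ℝ≥0∞, 0 < ε → ∃ g : T1 → ℂ,
      (MemLinf g ∧ eLpNorm g ⊤ hm ≤ 1) ∧ α.toFun (f - g) < ε) :
    eLpNorm f ⊤ hm ≤ 1 := by
  rw [← ENNReal.ofReal_one]
  refine eLpNorm_top_le_of_measure_norm_ge_eq_zero zero_le_one fun δ hδ => ?_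
  suffices ENNReal.ofReal δ * hm {x | 1 + δ ≤ ‖f x‖} = 0 by
    simpa [not_le.mpr hδ] using this
  refine nonpos_iff_eq_zero.mp (le_of_forall_gt_imp_ge_of_dense fun ε hε => ?_)
  obtain ⟨g, ⟨hg, hg1⟩, hfg⟩ := happrox ε hε
  have hsub : {x | 1 + δ ≤ ‖f x‖} ≤ᵐ[hm] {x | δ ≤ ‖(f - g) x‖} := by
    filter_upwards [ae_norm_le_of_eLpNorm_top_le (C := 1) (by simpa using hg1)] with x hx hfx
    have hfx' : 1 + δ ≤ ‖f x‖ := hfx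
    rw [NNReal.coe_one] at hx
    show δ ≤ ‖f x - g x‖
    linarith [norm_sub_norm_le (f x) (g x)]
  calc ENNReal.ofReal δ * hm {x | 1 + δ ≤ ‖f x‖}
      ≤ ENNReal.ofReal δ * hm {x | δ ≤ ‖(f - g) x‖} := by
        gcongr ENNReal.ofReal δ * ?_
        exact measure_mono_ae hsub
    _ ≤ α.toFun (f - g) :=
        α.mul_meas_ge_le_toFun (hf.1.1.sub hg.aestronglyMeasurable.aemeasurable) hδ.le
    _ ≤ ε := hfg.le

/-- the closed unit ball `𝔹` of `L^∞` is `α`-closed in `L^α`. -/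
theorem stmt10 (α : GaugeNorm) (hc : α.IsCont) (f : T1 → ℂ) (hf : α.MemL f)
    (happrox : ∀ ε : ℝ≥0∞, 0 < ε → ∃ g : T1 → ℂ,
      (MemLinf g ∧ eLpNorm g ⊤ hm ≤ 1) ∧ α.toFun (f - g) < ε) :
    eLpNorm f ⊤ hm ≤ 1 :=
  stmt10_general α f hf happrox
end
end
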